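/- Let H be a bialgebra over a field k, A a left H-module algebra, and F ∈ H ⊗ H an invertible element. Writing F⁻¹ = Σᵢ f̄ᵢ ⊗ ḡᵢ, equip A with the twisted product a ⋆ b := Σᵢ (f̄ᵢ•a)(ḡᵢ•b), and define Δ_F : H → H ⊗ H by Δ_F(h) := F · Δ(h) · F⁻¹. Then the twisted algebra (A, ⋆) is a module algebra with respect to Δ_F: for every h ∈ H and a, b ∈ A, writing Δ_F(h) = Σⱼ h'ⱼ ⊗ h''ⱼ, one has h•(a ⋆ b) = Σⱼ (h'ⱼ•a) ⋆ (h''ⱼ•b). -/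

import Mathlib

/-! `act2` factors through the algebra map `End A ⊗ End A → End (A ⊗ A)`, so it is
multiplicative. Hence `act2 F⁻¹ ∘ act2 (Δ_F h) = act2 (F⁻¹ F Δ(h) F⁻¹) = act2 (Δ(h) F⁻¹)`,
while the module-algebra axiom gives `h • m(act2 F⁻¹ u) = m(act2 (Δ(h) F⁻¹) u)`. -/

open TensorProduct

noncomputable section

variable {k H A : Type*} [Field k] [Ring H] [Bialgebra k H] [Ring A] [Algebra k A]

/-- The lift of an action `H → End A` to a map `H ⊗ H → End (A ⊗ A)`. -/
def act2 (act : H →ₐ[k] Module.End k A) :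
    H ⊗[k] H →ₗ[k] (A ⊗[k] A →ₗ[k] A ⊗[k] A) :=
  TensorProduct.homTensorHomMap (RingHom.id k) A A A A ∘ₗ
    TensorProduct.map act.toLinearMap act.toLinearMap

/-- The twisted multiplication `A ⊗ A → A` determined by `Finv`:
`a ⊗ b ↦ a ⋆ b = Σᵢ (f̄ᵢ • a)(ḡᵢ • b)` for `Finv = Σᵢ f̄ᵢ ⊗ ḡᵢ`. -/
def twistMulMap (act : H →ₐ[k] Module.End k A) (Finv : H ⊗[k] H) :
    A ⊗[k] A →ₗ[k] A :=
  LinearMap.mul' k A ∘ₗ act2 act Finv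

/-- The twisted comultiplication `Δ_F(h) = F · Δ(h) · F⁻¹`. -/
def DeltaF (F Finv : H ⊗[k] H) : H →ₗ[k] H ⊗[k] H :=
  LinearMap.mulLeft k F ∘ₗ LinearMap.mulRight k Finv ∘ₗ Coalgebra.comul

lemma act2_eq_endTensorEndAlgHom_comp (act : H →ₐ[k] Module.End k A) :
    act2 act =
      (Module.endTensorEndAlgHom.comp (Algebra.TensorProduct.map act act)).toLinearMap := by
  ext x y
  rfl

lemma act2_mul (act : H →ₐ[k] Module.End k A) (x y : H ⊗[k] H) :
    act2 act (x * y) = act2 act x ∘ₗ act2 act y := by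
  rw [act2_eq_endTensorEndAlgHom_comp]
  exact map_mul (Module.endTensorEndAlgHom.comp (Algebra.TensorProduct.map act act)) x y

lemma act_comp_mul' (act : H →ₐ[k] Module.End k A)
    (hact_mul : ∀ (h : H) (a b : A),
      act h (a * b) = LinearMap.mul' k A (act2 act (Coalgebra.comul h) (a ⊗ₜ[k] b)))
    (h : H) :
    act h ∘ₗ LinearMap.mul' k A = LinearMap.mul' k A ∘ₗ act2 act (Coalgebra.comul h) :=
  TensorProduct.ext' fun a b => by simpa using hact_mul h a b

lemma act2_comp_act2_DeltaF (act : H →ₐ[k] Module.End k A) {F Finv : H ⊗[k] H}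
    (hF' : Finv * F = 1) (h : H) :
    act2 act Finv ∘ₗ act2 act (DeltaF F Finv h) = act2 act (Coalgebra.comul h * Finv) := by
  rw [← act2_mul, DeltaF, LinearMap.comp_apply, LinearMap.comp_apply, LinearMap.mulLeft_apply,
    LinearMap.mulRight_apply, ← mul_assoc, hF', one_mul]

theorem twisted_module_algebra_general (act : H →ₐ[k] Module.End k A)
    (hact_mul : ∀ (h : H) (a b : A),
      act h (a * b) = LinearMap.mul' k A (act2 act (Coalgebra.comul h) (a ⊗ₜ[k] b)))
    (F Finv : H ⊗[k] H) (hF' : Finv * F = 1)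
    (h : H) (a b : A) :
    act h (twistMulMap act Finv (a ⊗ₜ[k] b)) =
      twistMulMap act Finv (act2 act (DeltaF F Finv h) (a ⊗ₜ[k] b)) := by
  calc act h (twistMulMap act Finv (a ⊗ₜ[k] b))
      = LinearMap.mul' k A (act2 act (Coalgebra.comul h) (act2 act Finv (a ⊗ₜ[k] b))) :=
        LinearMap.congr_fun (act_comp_mul' act hact_mul h) _
    _ = LinearMap.mul' k A (act2 act (Coalgebra.comul h * Finv) (a ⊗ₜ[k] b)) := by
        rw [act2_mul]; rfl
    _ = twistMulMap act Finv (act2 act (DeltaF F Finv h) (a ⊗ₜ[k] b)) := by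
        rw [← act2_comp_act2_DeltaF act hF' h]; rfl

/-- for an invertible `F`, the twisted algebra `(A, ⋆)` is a module algebra
with respect to the twisted comultiplication `Δ_F`:
`h • (a ⋆ b) = Σⱼ (h'ⱼ • a) ⋆ (h''ⱼ • b)` where `Δ_F(h) = Σⱼ h'ⱼ ⊗ h''ⱼ`. -/
theorem twisted_module_algebra (act : H →ₐ[k] Module.End k A)
    (hact_mul : ∀ (h : H) (a b : A),
      act h (a * b) = LinearMap.mul' k A (act2 act (Coalgebra.comul h) (a ⊗ₜ[k] b)))
    (hact_one : ∀ h : H, act h (1 : A) = Coalgebra.counit (R := k) h • (1 : A))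
    (F Finv : H ⊗[k] H) (hF : F * Finv = 1) (hF' : Finv * F = 1)
    (h : H) (a b : A) :
    act h (twistMulMap act Finv (a ⊗ₜ[k] b)) =
      twistMulMap act Finv (act2 act (DeltaF F Finv h) (a ⊗ₜ[k] b)) :=
  twisted_module_algebra_general act hact_mul F Finv hF' h a b

end
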